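/- The function h(b) = (b² + 4√3·b + 9)/(4b² + 2√3·b + 6) satisfies h(0) = 3/2, h(√3/5) = 3/2, and at its unique critical point b₀ = (−10√3 + √384)/14 in [0, √3/5] it attains a local maximum with h(b₀) > 3/2. -/

import Mathlib

open Real Set

noncomputable def h19 : ℝ → ℝ :=
  fun b => (b ^ 2 + 4 * Real.sqrt 3 * b + 9) / (4 * b ^ 2 + 2 * Real.sqrt 3 * b + 6)

lemma hs3 : Real.sqrt 3 ^ 2 = 3 := Real.sq_sqrt (by norm_num)
lemma ht384 : Real.sqrt 384 ^ 2 = 384 := Real.sq_sqrt (by norm_num)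

lemma s3_pos : 0 < Real.sqrt 3 := Real.sqrt_pos.2 (by norm_num)
lemma t384_pos : 0 < Real.sqrt 384 := Real.sqrt_pos.2 (by norm_num)

lemma b0_pos : 0 < (-10 * Real.sqrt 3 + Real.sqrt 384) / 14 := by
  have h1 := hs3; have h2 := ht384; have h3 := s3_pos; have h4 := t384_pos
  nlinarith [sq_nonneg (Real.sqrt 384 - 10 * Real.sqrt 3)]

lemma D_pos (b : ℝ) : 0 < 4 * b ^ 2 + 2 * Real.sqrt 3 * b + 6 := by
  have h1 := hs3; have h3 := s3_pos
  nlinarith [sq_nonneg (2 * b + Real.sqrt 3 / 2)]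

lemma hderiv (b : ℝ) : HasDerivAt h19
    ((-14 * Real.sqrt 3 * b ^ 2 - 60 * b + 6 * Real.sqrt 3) /
      (4 * b ^ 2 + 2 * Real.sqrt 3 * b + 6) ^ 2) b := by
  have hN : HasDerivAt (fun x : ℝ => x ^ 2 + 4 * Real.sqrt 3 * x + 9)
      (2 * b + 4 * Real.sqrt 3) b := by
    have h1 := hasDerivAt_pow 2 b
    have h2 := (hasDerivAt_id b).const_mul (4 * Real.sqrt 3)
    simpa using ((h1.add h2).add_const 9)
  have hD : HasDerivAt (fun x : ℝ => 4 * x ^ 2 + 2 * Real.sqrt 3 * x + 6)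
      (8 * b + 2 * Real.sqrt 3) b := by
    have h1 := (hasDerivAt_pow 2 b).const_mul (4 : ℝ)
    have h2 := (hasDerivAt_id b).const_mul (2 * Real.sqrt 3)
    have := (h1.add h2).add_const 6
    exact this.congr_deriv (by rw [show (2:ℕ) - 1 = 1 from rfl]; push_cast; ring)
  have hne : 4 * b ^ 2 + 2 * Real.sqrt 3 * b + 6 ≠ 0 := (D_pos b).ne'
  have := hN.div hD hne
  exact this.congr_deriv (by rw [div_left_inj' (pow_ne_zero 2 hne)]; ring)

lemma deriv_h19 (b : ℝ) : deriv h19 b =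
    (-14 * Real.sqrt 3 * b ^ 2 - 60 * b + 6 * Real.sqrt 3) /
      (4 * b ^ 2 + 2 * Real.sqrt 3 * b + 6) ^ 2 :=
  (hderiv b).deriv

lemma q_b0 : -14 * Real.sqrt 3 * ((-10 * Real.sqrt 3 + Real.sqrt 384) / 14) ^ 2 -
    60 * ((-10 * Real.sqrt 3 + Real.sqrt 384) / 14) + 6 * Real.sqrt 3 = 0 := by
  have h1 := hs3; have h2 := ht384
  linear_combination ((20 * Real.sqrt 384 - 100 * Real.sqrt 3) / 14) * h1 -
    (Real.sqrt 3 / 14) * h2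

theorem stmt19 :
    h19 0 = 3 / 2 ∧ h19 (Real.sqrt 3 / 5) = 3 / 2 ∧
    (∀ b ∈ Icc (0 : ℝ) (Real.sqrt 3 / 5),
      (deriv h19 b = 0 ↔ b = (-10 * Real.sqrt 3 + Real.sqrt 384) / 14)) ∧
    IsLocalMax h19 ((-10 * Real.sqrt 3 + Real.sqrt 384) / 14) ∧
    h19 ((-10 * Real.sqrt 3 + Real.sqrt 384) / 14) > 3 / 2 := by
  have hs := hs3; have ht := ht384; have hsp := s3_pos; have htp := t384_pos
  set s := Real.sqrt 3 with hsdef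
  set t := Real.sqrt 384 with htdef
  set b₀ := (-10 * s + t) / 14 with hb0def
  have hb0 : 0 < b₀ := b0_pos
  have qpos : ∀ x, 0 ≤ x → x < b₀ → 0 < -14 * s * x ^ 2 - 60 * x + 6 * s := by
    intro x hx hxb
    have hq0 := q_b0
    nlinarith [mul_pos (sub_pos.2 hxb) (show 0 < 14 * s * (x + b₀) + 60 by nlinarith)]
  have qneg : ∀ x, b₀ < x → -14 * s * x ^ 2 - 60 * x + 6 * s < 0 := by
    intro x hxb
    have hq0 := q_b0
    nlinarith [mul_pos (sub_pos.2 hxb) (show 0 < 14 * s * (x + b₀) + 60 by nlinarith)]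
  refine ⟨?_, ?_, ?_, ?_, ?_⟩
  · simp [h19]; norm_num
  · have : h19 (s / 5) = ((s/5) ^ 2 + 4 * s * (s/5) + 9) / (4 * (s/5) ^ 2 + 2 * s * (s/5) + 6) := rfl
    rw [this]
    rw [show (s/5) ^ 2 + 4 * s * (s/5) + 9 = (288 : ℝ)/25 by nlinarith,
        show 4 * (s/5) ^ 2 + 2 * s * (s/5) + 6 = (192 : ℝ)/25 by nlinarith]
    norm_num
  · intro b hb
    rw [deriv_h19]
    have hDne : (4 * b ^ 2 + 2 * s * b + 6) ^ 2 ≠ 0 := pow_ne_zero 2 (D_pos b).ne'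
    rw [div_eq_zero_iff]
    rw [or_iff_left hDne]
    constructor
    · intro hq
      simp only [← hsdef, ← htdef] at hq
      have key : (b - b₀) * (14 * s * (b + b₀) + 60) = 0 := by
        linear_combination (-1 : ℝ) * hq + ((20 * t - 100 * s) / 14) * hs - (s / 14) * ht
      rcases mul_eq_zero.1 key with h | h
      · linarith [sub_eq_zero.1 h]
      · exfalso; nlinarith [hb.1]
    · intro hbe; rw [hbe]; exact q_b0
  · refine isLocalMax_of_deriv_Ioo hb0 (lt_add_one b₀) (hderiv b₀).continuousAt
      (fun x _ => ((hderiv x).differentiableAt).differentiableWithinAt)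
      (fun x _ => ((hderiv x).differentiableAt).differentiableWithinAt) ?_ ?_
    · intro x hx
      rw [deriv_h19]
      exact le_of_lt (div_pos (qpos x hx.1.le hx.2) (pow_pos (D_pos x) 2))
    · intro x hx
      rw [deriv_h19]
      exact le_of_lt (div_neg_of_neg_of_pos (qneg x hx.1) (pow_pos (D_pos x) 2))
  · have hmono : StrictMonoOn h19 (Icc 0 b₀) := by
      apply strictMonoOn_of_deriv_pos (convex_Icc 0 b₀)
      · exact Continuous.continuousOn (by
          apply Continuous.div
          · continuity
          · continuity
          · exact fun x => (D_pos x).ne')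
      · intro x hx
        rw [interior_Icc] at hx
        rw [deriv_h19]
        exact div_pos (qpos x hx.1.le hx.2) (pow_pos (D_pos x) 2)
    have := hmono ⟨le_refl 0, hb0.le⟩ (⟨hb0.le, le_refl _⟩) hb0
    have h0 : h19 0 = 3 / 2 := by simp [h19]; norm_num
    linarith [h0 ▸ this]
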